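/- Let n ≥ 2, k ≥ 1, and let h, h' be nonnegative integers with h ≤ C(k+n−1, n−1), n·h ≤ h' ≤ C(k+n, n−1) (the 'no linear syzygies' regime, s := h' − n·h ≥ 0). Let V ⊆ R_k be an h-dimensional subspace of the degree-k part of R = ℂ[x_1,…,x_n] such that dim_ℂ(R_1·V) = n·h (i.e. V has no linear syzygies). Let W ⊆ R_{k+1} be any subspace of dimension h' containing R_1·V, and set I = (V) + (W) + 𝔪^{k+2}, the ideal generated by V, W and 𝔪^{k+2}. Then I is a homogeneous ideal with 𝔪^{k+2} ⊆ I ⊆ 𝔪^k, I_k = V, I_{k+1} = W, and dim_ℂ(R/I) = C(k+n+1, n) − h − h'. -/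

import Mathlib

open MvPolynomial

noncomputable section

/-- The polynomial ring `ℂ[x_1,…,x_n]`. -/
abbrev Rn (n : ℕ) : Type := MvPolynomial (Fin n) ℂ

/-- The irrelevant maximal ideal `𝔪 = (x_1,…,x_n)`. -/
def mIdeal (n : ℕ) : Ideal (Rn n) := Ideal.span (Set.range (X : Fin n → Rn n))

/-- The degree-`j` graded piece of an ideal, as a `ℂ`-subspace of `R`. -/
def gradedPiece (n : ℕ) (I : Ideal (Rn n)) (j : ℕ) : Submodule ℂ (Rn n) :=
  Submodule.restrictScalars ℂ I ⊓ homogeneousSubmodule (Fin n) ℂ j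

/-- `R_1·V` : the `ℂ`-span of all products of a linear form with an element of `V`. -/
def R1mul (n : ℕ) (V : Submodule ℂ (Rn n)) : Submodule ℂ (Rn n) :=
  Submodule.span ℂ {f | ∃ ℓ ∈ homogeneousSubmodule (Fin n) ℂ 1, ∃ g ∈ V, f = ℓ * g}

/-!
A polynomial lies in `I = (V) + (W) + 𝔪^(k+2)` exactly when its homogeneous components of degree
`< k` vanish, its degree-`k` component lies in `V` and its degree-`(k+1)` component lies in `W`:
the subspace cut out by these conditions is an ideal because `R_1·V ⊆ W`, and it clearly contains
and is contained in `I`. Everything then follows degree by degree; in particular `R/I` is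
isomorphic to `R_0 ⊕ ⋯ ⊕ R_(k-1) ⊕ R_k/V ⊕ R_(k+1)/W`, whose dimension is
`C(k+n+1, n) - h - h'` by the hockey-stick identity.
-/

open Module Finset

-- At `c = 0` the truncated `c + i - 1` makes every term but the first vanish, as it should.
theorem Nat.sum_range_add_sub_one_choose (c m : ℕ) :
    ∑ i ∈ range (m + 1), (c + i - 1).choose i = (m + c).choose c := by
  rcases c with _ | c
  · simp [sum_range_succ']
  · have h (i : ℕ) : (c + 1 + i - 1).choose i = (i + c).choose c := by
      rw [show c + 1 + i - 1 = i + c by omega, Nat.choose_symm_add]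
    rw [sum_congr rfl fun i _ => h i, Nat.sum_range_add_choose, add_assoc]

namespace MvPolynomial

section CommSemiring

variable {σ R : Type*} [CommSemiring R]

instance [Finite σ] (j : ℕ) : Module.Finite R (homogeneousSubmodule σ R j) :=
  Module.Finite.iff_fg.mpr (homogeneousSubmodule_fg σ R j)

theorem homogeneousComponent_mul_of_mem_left {j : ℕ} {q : MvPolynomial σ R}
    (hq : q ∈ homogeneousSubmodule σ R j) (p : MvPolynomial σ R) (e : ℕ) :
    homogeneousComponent e (q * p) =
      if j ≤ e then q * homogeneousComponent (e - j) p else 0 := by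
  let := MvPolynomial.gradedAlgebra (σ := σ) (R := R)
  simp_rw [← decomposition.decompose'_apply]
  exact DirectSum.coe_decompose_mul_of_left_mem (homogeneousSubmodule σ R) e hq

theorem mem_pow_idealOfVars_iff_homogeneousComponent (j : ℕ) (p : MvPolynomial σ R) :
    p ∈ idealOfVars σ R ^ j ↔ ∀ d < j, homogeneousComponent d p = 0 := by
  simp only [mem_pow_idealOfVars_iff', MvPolynomial.ext_iff, coeff_homogeneousComponent,
    coeff_zero, ite_eq_right_iff]
  exact ⟨fun h d hd x hx => h x (hx ▸ hd), fun h x hx => h _ hx x rfl⟩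

theorem mem_pow_idealOfVars_of_mem_homogeneousSubmodule {j d : ℕ} (hjd : j ≤ d)
    {p : MvPolynomial σ R} (hp : p ∈ homogeneousSubmodule σ R d) : p ∈ idealOfVars σ R ^ j :=
  (mem_pow_idealOfVars_iff_homogeneousComponent j p).2 fun e he => by
    rw [homogeneousComponent_of_mem hp, if_neg (by omega)]

def gradedSubmodule (U : ℕ → Submodule R (MvPolynomial σ R)) :
    Submodule R (MvPolynomial σ R) :=
  ⨅ d, (U d).comap (homogeneousComponent d)

variable {U : ℕ → Submodule R (MvPolynomial σ R)} {p : MvPolynomial σ R}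

theorem mem_gradedSubmodule :
    p ∈ gradedSubmodule U ↔ ∀ d, homogeneousComponent d p ∈ U d := by
  simp [gradedSubmodule, Submodule.mem_iInf]

theorem mem_gradedSubmodule_iff_of_mem {d : ℕ} (hp : p ∈ homogeneousSubmodule σ R d) :
    p ∈ gradedSubmodule U ↔ p ∈ U d := by
  rw [mem_gradedSubmodule]
  refine ⟨fun h => by simpa [homogeneousComponent_of_mem hp] using h d, fun h e => ?_⟩
  rw [homogeneousComponent_of_mem hp]
  split_ifs with he
  · exact he ▸ h
  · exact zero_mem _

theorem gradedSubmodule_inf_homogeneousSubmodule {d : ℕ}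
    (hU : U d ≤ homogeneousSubmodule σ R d) :
    gradedSubmodule U ⊓ homogeneousSubmodule σ R d = U d := by
  ext p
  exact ⟨fun ⟨hpU, hp⟩ => (mem_gradedSubmodule_iff_of_mem hp).1 hpU,
    fun hp => ⟨(mem_gradedSubmodule_iff_of_mem (hU hp)).2 hp, hU hp⟩⟩

theorem gradedSubmodule_le {J : Submodule R (MvPolynomial σ R)} (h : ∀ d, U d ≤ J) :
    gradedSubmodule U ≤ J := fun p hp =>
  sum_homogeneousComponent p ▸ Submodule.sum_mem _ fun d _ => h d (mem_gradedSubmodule.1 hp d)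

/-- Since `R` is generated by the variables, stability under linear forms suffices. -/
theorem mul_mem_gradedSubmodule
    (hU : ∀ d, ∀ ℓ ∈ homogeneousSubmodule σ R 1, ∀ p ∈ U d, ℓ * p ∈ U (d + 1))
    (r : MvPolynomial σ R) (hp : p ∈ gradedSubmodule U) : r * p ∈ gradedSubmodule U := by
  induction r using MvPolynomial.induction_on generalizing p with
  | C a => rw [C_mul']; exact Submodule.smul_mem _ a hp
  | add r s hr hs => rw [add_mul]; exact add_mem (hr hp) (hs hp)
  | mul_X r i hr =>
    rw [mul_assoc]
    refine hr (mem_gradedSubmodule.2 fun e => ?_)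
    rw [homogeneousComponent_mul_of_mem_left (isHomogeneous_X R i)]
    split_ifs with he
    · rw [← Nat.sub_add_cancel he]
      exact hU _ _ (isHomogeneous_X R i) _ (mem_gradedSubmodule.1 hp _)
    · exact zero_mem _

def gradedIdeal (U : ℕ → Submodule R (MvPolynomial σ R))
    (hU : ∀ d, ∀ ℓ ∈ homogeneousSubmodule σ R 1, ∀ p ∈ U d, ℓ * p ∈ U (d + 1)) :
    Ideal (MvPolynomial σ R) :=
  { gradedSubmodule U with smul_mem' := fun r _ hp => mul_mem_gradedSubmodule hU r hp }

end CommSemiring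

section Field

variable {σ K : Type*} [Field K]

theorem finrank_homogeneousSubmodule [Fintype σ] (j : ℕ) :
    finrank K (homogeneousSubmodule σ K j) = (Fintype.card σ + j - 1).choose j := by
  classical
  have hdeg :
      {d : σ →₀ ℕ | d.degree = j} = ((univ : Finset σ).finsuppAntidiag j : Set _) := by
    ext d
    simp [Finsupp.degree_eq_sum]
  rw [homogeneousSubmodule_eq_finsupp_supported, hdeg,
    (AddMonoidAlgebra.supportedEquivFinsupp _).finrank_eq, finrank_finsupp_self]
  simp [card_finsuppAntidiag_nat_eq_choose]

/-- `R ⧸ gradedSubmodule U ≃ ⨁_(d < m) R_d ⧸ U d` when `U d = R_d` for `d ≥ m`. -/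
theorem finrank_quotient_gradedSubmodule_add [Finite σ]
    (U : ℕ → Submodule K (MvPolynomial σ K))
    (hU : ∀ d, U d ≤ homogeneousSubmodule σ K d) {m : ℕ}
    (htop : ∀ d, m ≤ d → U d = homogeneousSubmodule σ K d) :
    finrank K (MvPolynomial σ K ⧸ gradedSubmodule U) + ∑ d ∈ range m, finrank K (U d) =
      ∑ d ∈ range m, finrank K (homogeneousSubmodule σ K d) := by
  let Φ : MvPolynomial σ K →ₗ[K] (Π d : Fin m, homogeneousSubmodule σ K d) :=
    LinearMap.pi fun d =>
      (homogeneousComponent (d : ℕ)).codRestrict _ (homogeneousComponent_mem _)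
  have hΦ : Function.Surjective Φ := fun a => ⟨∑ d, (a d : MvPolynomial σ K), by
    ext d : 2
    simp [Φ, map_sum, homogeneousComponent_of_mem (a _).2, Fin.val_inj]⟩
  let U' (d : Fin m) := (U d).comap (homogeneousSubmodule σ K d).subtype
  have hker : LinearMap.ker ((Submodule.pi Set.univ U').mkQ ∘ₗ Φ) = gradedSubmodule U := by
    ext p
    simp only [LinearMap.ker_comp, Submodule.ker_mkQ, Submodule.mem_comap, Submodule.mem_pi,
      Set.mem_univ, true_implies, mem_gradedSubmodule]
    refine ⟨fun h d => ?_, fun h d => h d⟩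
    rcases lt_or_ge d m with hd | hd
    · exact h ⟨d, hd⟩
    · exact htop d hd ▸ homogeneousComponent_mem d p
  have e : (MvPolynomial σ K ⧸ gradedSubmodule U) ≃ₗ[K]
      Π d : Fin m, homogeneousSubmodule σ K d ⧸ U' d :=
    (Submodule.quotEquivOfEq _ _ hker.symm).trans
      ((LinearMap.quotKerEquivOfSurjective _
        (by rw [LinearMap.coe_comp]; exact (Submodule.mkQ_surjective _).comp hΦ)).trans
        (Submodule.quotientPi U'))
  have hU' (d : Fin m) : finrank K (U' d) = finrank K (U d) :=
    (Submodule.comapSubtypeEquivOfLe (hU d)).finrank_eq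
  have : ∀ d : Fin m, Module.Free K (homogeneousSubmodule σ K d ⧸ U' d) :=
    fun _ => Module.Free.of_divisionRing _ _
  rw [e.finrank_eq, finrank_pi_fintype]
  simp_rw [← Fin.sum_univ_eq_sum_range, ← hU', ← sum_add_distrib,
    Submodule.finrank_quotient_add_finrank]

end Field

section TwoStep

variable {σ R : Type*} [CommSemiring R]

def twoStepGrading (k : ℕ) (V W : Submodule R (MvPolynomial σ R)) :
    ℕ → Submodule R (MvPolynomial σ R) := fun d =>
  if d < k then ⊥ else if d = k then V else if d = k + 1 then W else homogeneousSubmodule σ R d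

variable {k d : ℕ} {V W : Submodule R (MvPolynomial σ R)}

@[simp]
theorem twoStepGrading_self : twoStepGrading k V W k = V := by
  simp [twoStepGrading]

@[simp]
theorem twoStepGrading_succ : twoStepGrading k V W (k + 1) = W := by
  simp [twoStepGrading]

theorem twoStepGrading_of_lt (hd : d < k) : twoStepGrading k V W d = ⊥ := by
  simp [twoStepGrading, hd]

theorem twoStepGrading_of_add_two_le (hd : k + 2 ≤ d) :
    twoStepGrading k V W d = homogeneousSubmodule σ R d := by
  simp [twoStepGrading, show ¬d < k by omega, show d ≠ k by omega, show d ≠ k + 1 by omega]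

theorem twoStepGrading_le (hV : V ≤ homogeneousSubmodule σ R k)
    (hW : W ≤ homogeneousSubmodule σ R (k + 1)) (d : ℕ) :
    twoStepGrading k V W d ≤ homogeneousSubmodule σ R d := by
  obtain hd | rfl | rfl | hd : d < k ∨ d = k ∨ d = k + 1 ∨ k + 2 ≤ d := by omega
  · simp [twoStepGrading_of_lt hd]
  · simpa using hV
  · simpa using hW
  · rw [twoStepGrading_of_add_two_le hd]

theorem mul_mem_twoStepGrading (hW : W ≤ homogeneousSubmodule σ R (k + 1))
    (hVW : ∀ ℓ ∈ homogeneousSubmodule σ R 1, ∀ v ∈ V, ℓ * v ∈ W) (d : ℕ) :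
    ∀ ℓ ∈ homogeneousSubmodule σ R 1, ∀ p ∈ twoStepGrading k V W d,
      ℓ * p ∈ twoStepGrading k V W (d + 1) := by
  intro ℓ hℓ p hp
  obtain hd | rfl | hd : d < k ∨ d = k ∨ k + 1 ≤ d := by omega
  · rw [twoStepGrading_of_lt hd, Submodule.mem_bot] at hp
    simp [hp]
  · simpa using hVW ℓ hℓ p (by simpa using hp)
  · have hpd : p ∈ homogeneousSubmodule σ R d := by
      obtain rfl | hd := eq_or_lt_of_le hd
      · exact hW (by simpa using hp)
      · rwa [twoStepGrading_of_add_two_le hd] at hp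
    rw [twoStepGrading_of_add_two_le (by omega), add_comm]
    exact IsHomogeneous.mul hℓ hpd

theorem span_sup_span_sup_pow_idealOfVars_eq_gradedIdeal (hV : V ≤ homogeneousSubmodule σ R k)
    (hW : W ≤ homogeneousSubmodule σ R (k + 1))
    (hVW : ∀ ℓ ∈ homogeneousSubmodule σ R 1, ∀ v ∈ V, ℓ * v ∈ W) :
    Ideal.span (V : Set (MvPolynomial σ R)) ⊔ Ideal.span (W : Set (MvPolynomial σ R)) ⊔
        idealOfVars σ R ^ (k + 2) =
      gradedIdeal (twoStepGrading k V W) (mul_mem_twoStepGrading hW hVW) := by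
  have hle (d : ℕ) : twoStepGrading k V W d ≤ gradedSubmodule (twoStepGrading k V W) :=
    fun p hp => (mem_gradedSubmodule_iff_of_mem (twoStepGrading_le hV hW d hp)).2 hp
  apply le_antisymm
  · refine sup_le (sup_le ?_ ?_) fun p hp => mem_gradedSubmodule.2 fun d => ?_
    · exact Ideal.span_le.2 fun v hv => hle k (by simpa using hv)
    · exact Ideal.span_le.2 fun w hw => hle (k + 1) (by simpa using hw)
    · rcases lt_or_ge d (k + 2) with hd | hd
      · rw [(mem_pow_idealOfVars_iff_homogeneousComponent _ p).1 hp d hd]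
        exact zero_mem _
      · rw [twoStepGrading_of_add_two_le hd]
        exact homogeneousComponent_mem d p
  · refine fun p hp =>
      (Submodule.restrictScalars_mem R _ p).1 (gradedSubmodule_le (fun d => ?_) hp)
    obtain hd | rfl | rfl | hd : d < k ∨ d = k ∨ d = k + 1 ∨ k + 2 ≤ d := by omega
    · simp [twoStepGrading_of_lt hd]
    · exact fun v hv =>
        Ideal.mem_sup_left (Ideal.mem_sup_left (Ideal.subset_span (by simpa using hv)))
    · exact fun w hw =>
        Ideal.mem_sup_left (Ideal.mem_sup_right (Ideal.subset_span (by simpa using hw)))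
    · rw [twoStepGrading_of_add_two_le hd]
      exact fun q hq => Ideal.mem_sup_right (mem_pow_idealOfVars_of_mem_homogeneousSubmodule hd hq)

theorem sum_range_finrank_twoStepGrading [Nontrivial R] :
    ∑ d ∈ range (k + 2), finrank R (twoStepGrading k V W d) = finrank R V + finrank R W := by
  rw [sum_range_succ, sum_range_succ, sum_eq_zero fun d hd => by
    rw [twoStepGrading_of_lt (mem_range.1 hd), finrank_bot], twoStepGrading_self,
    twoStepGrading_succ, zero_add]

end TwoStep

end MvPolynomial

theorem stmt17_general (n k h h' : ℕ)
    (V : Submodule ℂ (Rn n)) (hV : V ≤ homogeneousSubmodule (Fin n) ℂ k)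
    (hVdim : Module.finrank ℂ ↥V = h)
    (W : Submodule ℂ (Rn n)) (hW : W ≤ homogeneousSubmodule (Fin n) ℂ (k + 1))
    (hVW : R1mul n V ≤ W) (hWdim : Module.finrank ℂ ↥W = h')
    (I : Ideal (Rn n))
    (hI : I = Ideal.span (V : Set (Rn n)) ⊔ Ideal.span (W : Set (Rn n)) ⊔ mIdeal n ^ (k + 2)) :
    mIdeal n ^ (k + 2) ≤ I ∧ I ≤ mIdeal n ^ k ∧
    gradedPiece n I k = V ∧ gradedPiece n I (k + 1) = W ∧
    (Module.finrank ℂ (Rn n ⧸ I) : ℤ) = (Nat.choose (k + n + 1) n : ℤ) - h - h' := by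
  have hVW' : ∀ ℓ ∈ homogeneousSubmodule (Fin n) ℂ 1, ∀ v ∈ V, ℓ * v ∈ W :=
    fun ℓ hℓ v hv => hVW (Submodule.subset_span ⟨ℓ, hℓ, v, hv, rfl⟩)
  have hIU : I = gradedIdeal (twoStepGrading k V W) (mul_mem_twoStepGrading hW hVW') :=
    hI.trans (span_sup_span_sup_pow_idealOfVars_eq_gradedIdeal hV hW hVW')
  have hres : I.restrictScalars ℂ = gradedSubmodule (twoStepGrading k V W) := by
    rw [hIU]
    rfl
  refine ⟨hI ▸ le_sup_right, fun p hp => ?_, ?_, ?_, ?_⟩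
  · refine (mem_pow_idealOfVars_iff_homogeneousComponent k p).2 fun d hd => ?_
    rw [hIU] at hp
    simpa [twoStepGrading_of_lt hd] using mem_gradedSubmodule.1 hp d
  · rw [gradedPiece, hres, gradedSubmodule_inf_homogeneousSubmodule (twoStepGrading_le hV hW k),
      twoStepGrading_self]
  · rw [gradedPiece, hres,
      gradedSubmodule_inf_homogeneousSubmodule (twoStepGrading_le hV hW (k + 1)),
      twoStepGrading_succ]
  · have hdim := finrank_quotient_gradedSubmodule_add _ (twoStepGrading_le hV hW)
      (m := k + 2) fun d hd => twoStepGrading_of_add_two_le hd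
    rw [sum_range_finrank_twoStepGrading, ← hres,
      (Submodule.Quotient.restrictScalarsEquiv ℂ I).finrank_eq] at hdim
    simp only [finrank_homogeneousSubmodule, Fintype.card_fin,
      Nat.sum_range_add_sub_one_choose] at hdim
    rw [show k + 1 + n = k + n + 1 by omega, hVdim, hWdim] at hdim
    omega

/-- Parametrization of 2-step ideals without linear syzygies: given `V ⊆ R_k` of dimension
`h` with `dim (R_1·V) = n·h` and `W ⊆ R_{k+1}` of dimension `h'` containing `R_1·V`, the
ideal `I = (V) + (W) + 𝔪^(k+2)` satisfies `𝔪^(k+2) ⊆ I ⊆ 𝔪^k`, `I_k = V`, `I_{k+1} = W`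
and `dim_ℂ(R/I) = C(k+n+1, n) − h − h'`. -/
theorem stmt17 (n k h h' : ℕ) (hn : 2 ≤ n) (hk : 1 ≤ k)
    (hh : h ≤ Nat.choose (k + n - 1) (n - 1))
    (hlow : n * h ≤ h') (hup : h' ≤ Nat.choose (k + n) (n - 1))
    (V : Submodule ℂ (Rn n)) (hV : V ≤ homogeneousSubmodule (Fin n) ℂ k)
    (hVdim : Module.finrank ℂ ↥V = h)
    (hVnosyz : Module.finrank ℂ ↥(R1mul n V) = n * h)
    (W : Submodule ℂ (Rn n)) (hW : W ≤ homogeneousSubmodule (Fin n) ℂ (k + 1))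
    (hVW : R1mul n V ≤ W) (hWdim : Module.finrank ℂ ↥W = h')
    (I : Ideal (Rn n))
    (hI : I = Ideal.span (V : Set (Rn n)) ⊔ Ideal.span (W : Set (Rn n)) ⊔ mIdeal n ^ (k + 2)) :
    mIdeal n ^ (k + 2) ≤ I ∧ I ≤ mIdeal n ^ k ∧
    gradedPiece n I k = V ∧ gradedPiece n I (k + 1) = W ∧
    (Module.finrank ℂ (Rn n ⧸ I) : ℤ) = (Nat.choose (k + n + 1) n : ℤ) - h - h' :=
  stmt17_general n k h h' V hV hVdim W hW hVW hWdim I hI
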